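/- For all integers n ≥ 3 and all integers k1, k2 with 1 ≤ k1 < k2 ≤ n−1, [∏_{m=k2+2}^{n} (1 − 3/C(m,2))] · (1/C(k2+1,2)) · [∏_{m=k1+2}^{k2} (1 − 1/C(m,2))] · (1/C(k1+1,2)) = 4(n+1)(n+2)/((n−1)(n−2)(k1+1)(k1+2)(k2+2)(k2+3)), where C(m,2) = m(m−1)/2 and empty products equal 1. -/

import Mathlib

/-!
Both products telescope: `1 - 3 / C(m,2) = (m - 3)(m + 2) / (m (m - 1))` and
`1 - 1 / C(m,2) = (m - 2)(m + 1) / (m (m - 1))`, so each partial product has a closed form,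
obtained by induction on the upper end. Multiplying the two closed forms by the two middle factors
`1 / C(k + 1, 2)` gives the stated rational function.
-/

lemma prod_Icc_one_sub_three_div_choose_two {k : ℕ} (hk : 2 ≤ k) {n : ℕ} (hkn : k + 1 ≤ n) :
    ∏ m ∈ Finset.Icc (k + 2) n, (1 - 3 / ((m : ℝ) * ((m : ℝ) - 1) / 2)) =
      ((k : ℝ) - 1) * k * ((n : ℝ) + 1) * ((n : ℝ) + 2) /
        (((n : ℝ) - 2) * ((n : ℝ) - 1) * ((k : ℝ) + 2) * ((k : ℝ) + 3)) := by
  have hk' : (2 : ℝ) ≤ k := by exact_mod_cast hk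
  induction n, hkn using Nat.le_induction with
  | base =>
    rw [Finset.Icc_eq_empty (by omega), Finset.prod_empty]
    have : (k : ℝ) + 1 - 2 ≠ 0 := by linarith
    have : (k : ℝ) + 1 - 1 ≠ 0 := by linarith
    push_cast
    field_simp
    ring
  | succ n hkn ih =>
    have hn : (3 : ℝ) ≤ n := by exact_mod_cast (by omega : 3 ≤ n)
    have : (n : ℝ) - 2 ≠ 0 := by linarith
    have : (n : ℝ) - 1 ≠ 0 := by linarith
    have : (n : ℝ) + 1 - 2 ≠ 0 := by linarith
    have : (n : ℝ) + 1 - 1 ≠ 0 := by linarith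
    rw [Finset.prod_Icc_succ_top (by omega), ih]
    push_cast
    field_simp
    ring

lemma prod_Icc_one_sub_one_div_choose_two {k : ℕ} (hk : 1 ≤ k) {n : ℕ} (hkn : k + 1 ≤ n) :
    ∏ m ∈ Finset.Icc (k + 2) n, (1 - 1 / ((m : ℝ) * ((m : ℝ) - 1) / 2)) =
      (k : ℝ) * ((n : ℝ) + 1) / (((k : ℝ) + 2) * ((n : ℝ) - 1)) := by
  have hk' : (1 : ℝ) ≤ k := by exact_mod_cast hk
  induction n, hkn using Nat.le_induction with
  | base =>
    rw [Finset.Icc_eq_empty (by omega), Finset.prod_empty]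
    have : (k : ℝ) + 1 - 1 ≠ 0 := by linarith
    push_cast
    field_simp
    ring
  | succ n hkn ih =>
    have hn : (2 : ℝ) ≤ n := by exact_mod_cast (by omega : 2 ≤ n)
    have : (n : ℝ) - 1 ≠ 0 := by linarith
    have : (n : ℝ) + 1 - 1 ≠ 0 := by linarith
    rw [Finset.prod_Icc_succ_top (by omega), ih]
    push_cast
    field_simp
    ring

theorem stmt4 (n k1 k2 : ℕ) (hk1 : 1 ≤ k1) (hk12 : k1 < k2) (hk2 : k2 ≤ n - 1) :
    (∏ m ∈ Finset.Icc (k2 + 2) n, (1 - 3 / ((m : ℝ) * ((m : ℝ) - 1) / 2))) *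
      (1 / (((k2 : ℝ) + 1) * ((k2 : ℝ) + 1 - 1) / 2)) *
    (∏ m ∈ Finset.Icc (k1 + 2) k2, (1 - 1 / ((m : ℝ) * ((m : ℝ) - 1) / 2))) *
      (1 / (((k1 : ℝ) + 1) * ((k1 : ℝ) + 1 - 1) / 2)) =
    4 * ((n : ℝ) + 1) * ((n : ℝ) + 2) /
      (((n : ℝ) - 1) * ((n : ℝ) - 2) * ((k1 : ℝ) + 1) * ((k1 : ℝ) + 2) *
        ((k2 : ℝ) + 2) * ((k2 : ℝ) + 3)) := by
  rw [prod_Icc_one_sub_three_div_choose_two (by omega) (by omega),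
    prod_Icc_one_sub_one_div_choose_two hk1 (by omega)]
  have hk1' : (1 : ℝ) ≤ k1 := by exact_mod_cast hk1
  have hk2' : (k1 : ℝ) + 1 ≤ k2 := by exact_mod_cast hk12
  have hn : (k2 : ℝ) + 1 ≤ n := by exact_mod_cast (by omega : k2 + 1 ≤ n)
  have : (n : ℝ) - 1 ≠ 0 := by linarith
  have : (n : ℝ) - 2 ≠ 0 := by linarith
  have : (k2 : ℝ) - 1 ≠ 0 := by linarith
  have : (k1 : ℝ) + 1 - 1 ≠ 0 := by linarith
  have : (k2 : ℝ) + 1 - 1 ≠ 0 := by linarith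
  field_simp
  ring
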